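/- Let E : y^2 = x^3 - 2rDx with 2rD square-free, and let P be a point of infinite order in E(Q). Then the canonical height satisfies ĥ(P) ≥ (1/16)·log(4rD). -/

import Mathlib

/-!
Write `y² = x³ - N x` with `N = 2rD`, so `N ≡ 2 (mod 4)` and `N` is squarefree. If `Q` and `2Q`
are not `2`-torsion, then `x(2Q) = (s/e)²` is a square, and the equation at `2Q` forces
`s⁴ = N e⁴ + w²` for an integer `w`. Reducing mod `4` shows that `e` is even, so
`h(x(2Q)) = log s² ≥ ½ log 16N`. Squarefreeness makes `(s⁴ + N e⁴) / (2swe)` a fraction in lowest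
terms, and `x(4Q)` is its square, so `h(x(4Q)) ≥ 4 h(x(2Q))`. Hence `h(x(2ⁿP)) / 4ⁿ` increases from
`n = 1` on, and its limit `2ĥ(P)` is at least `h(x(2P)) / 4 ≥ log(16N) / 8`.
-/

/-- The curve `y² = x³ + Ax` over `ℚ`. -/
def Ecurve (A : ℚ) : WeierstrassCurve.Affine ℚ := ⟨0, 0, 0, A, 0⟩

/-- The `x`-coordinate of an affine point, with junk value `0` at the point at infinity. -/
def xCoord {A : ℚ} : (Ecurve A).Point → ℚ
  | .zero => 0
  | @WeierstrassCurve.Affine.Point.some _ _ _ x _ _ => x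

/-- The naive (Weil) logarithmic height of a rational number `x = a/d²` in lowest terms,
`h = log max {|a|, d²}`. -/
noncomputable def naiveHeight (x : ℚ) : ℝ := Real.log (max (|x.num| : ℝ) (x.den : ℝ))

open WeierstrassCurve.Affine Filter Topology

namespace Ecurve

variable {A : ℚ}

lemma equation {x y : ℚ} (h : (Ecurve A).Nonsingular x y) : y ^ 2 = x ^ 3 + A * x := by
  simpa [Ecurve] using ((Ecurve A).equation_iff x y).mp h.1

lemma negY (x y : ℚ) : (Ecurve A).negY x y = -y := by
  simp [WeierstrassCurve.Affine.negY, Ecurve]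

@[simp]
lemma xCoord_some {x y : ℚ} (h : (Ecurve A).Nonsingular x y) : xCoord (Point.some _ _ h) = x :=
  rfl

lemma xCoord_add_self {x y : ℚ} (h : (Ecurve A).Nonsingular x y) (hy : y ≠ 0) :
    xCoord (Point.some _ _ h + Point.some _ _ h) = ((x ^ 2 - A) / (2 * y)) ^ 2 := by
  have hy' : y ≠ (Ecurve A).negY x y := by
    rw [negY]
    intro h'
    exact hy (by linarith)
  rw [Point.add_self_of_Y_ne hy', xCoord_some, addX, slope_of_Y_ne rfl hy', negY]
  simp only [Ecurve]
  field_simp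
  linear_combination (-32 * x) * equation h

lemma exists_eq_some_of_add_self_ne_zero {Q : (Ecurve A).Point} (hQ : Q + Q ≠ 0) :
    ∃ (x y : ℚ) (h : (Ecurve A).Nonsingular x y), Q = .some _ _ h ∧ y ≠ 0 := by
  cases Q with
  | zero => exact absurd (zero_add 0) hQ
  | @some x y h =>
    refine ⟨x, y, h, rfl, fun hy => hQ (Point.add_self_of_Y_eq ?_)⟩
    rw [negY, hy, neg_zero]

end Ecurve

section PowFourRelation

variable {N s e w : ℤ}

lemma two_dvd_of_pow_four_eq (hN : N % 4 = 2) (h : s ^ 4 = N * e ^ 4 + w ^ 2) : 2 ∣ e := by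
  rw [← even_iff_two_dvd]
  by_contra he
  obtain ⟨k, rfl⟩ := Int.not_even_iff_odd.mp he
  have hN' : (N : ZMod 4) = 2 := by rw [← ZMod.intCast_mod N 4, Nat.cast_ofNat, hN]; rfl
  have h4 := congrArg (Int.cast : ℤ → ZMod 4) h
  push_cast [hN'] at h4
  revert h4
  generalize (s : ZMod 4) = a, (k : ZMod 4) = b, (w : ZMod 4) = c
  revert a b c
  decide

lemma isCoprime_of_pow_four_eq (hN : Squarefree N) (hse : IsCoprime s e)
    (h : s ^ 4 = N * e ^ 4 + w ^ 2) : IsCoprime N s := by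
  refine isCoprime_of_prime_dvd (fun h0 => not_squarefree_zero (h0.1 ▸ hN)) ?_
  intro p hp hpN hps
  have hpw : p ∣ w := by
    refine hp.dvd_of_dvd_pow (n := 2) ?_
    rw [show w ^ 2 = s ^ 4 - N * e ^ 4 by rw [h]; ring]
    exact (dvd_pow hps four_ne_zero).sub (hpN.mul_right _)
  have hp2 : p ^ 2 ∣ N * e ^ 4 := by
    rw [show N * e ^ 4 = (s ^ 2) ^ 2 - w ^ 2 by rw [← pow_mul, h]; ring]
    exact (pow_dvd_pow_of_dvd (dvd_pow hps two_ne_zero) 2).sub (pow_dvd_pow_of_dvd hpw 2)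
  have hpe : IsCoprime (p ^ 2) (e ^ 4) :=
    (IsCoprime.of_isCoprime_of_dvd_left hse hps).pow
  exact hp.not_isUnit (hN p (by simpa [sq] using hpe.dvd_of_dvd_mul_right hp2))

lemma isCoprime_pow_four_add_mul (hN : Squarefree N) (hse : IsCoprime s e) (he : 2 ∣ e)
    (h : s ^ 4 = N * e ^ 4 + w ^ 2) : IsCoprime (s ^ 4 + N * e ^ 4) (2 * s * w * e) := by
  have hA_e : IsCoprime (s ^ 4 + N * e ^ 4) e :=
    ((hse.pow (m := 4) (n := 4)).add_mul_right_left N).of_isCoprime_of_dvd_right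
      (dvd_pow_self e four_ne_zero)
  have hA_2 : IsCoprime (s ^ 4 + N * e ^ 4) 2 := hA_e.of_isCoprime_of_dvd_right he
  have hA_s : IsCoprime (s ^ 4 + N * e ^ 4) s := by
    rw [show s ^ 4 + N * e ^ 4 = N * e ^ 4 + s * s ^ 3 by ring]
    exact ((isCoprime_of_pow_four_eq hN hse h).mul_left hse.symm.pow_left).add_mul_left_left _
  -- `w ^ 2 = 2 s ^ 4 - (s ^ 4 + N e ^ 4)`
  have hA_w : IsCoprime (s ^ 4 + N * e ^ 4) w := by
    have := (hA_2.mul_right (hA_s.pow_right (n := 4))).add_mul_left_right (-1)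
    rw [show 2 * s ^ 4 + (s ^ 4 + N * e ^ 4) * -1 = w ^ 2 by rw [h]; ring] at this
    exact this.of_isCoprime_of_dvd_right (dvd_pow_self w two_ne_zero)
  exact ((hA_2.mul_right hA_s).mul_right hA_w).mul_right hA_e

lemma pow_four_lower_bounds (hN : 0 < N) (he : 0 < e) (he2 : 2 ∣ e)
    (h : s ^ 4 = N * e ^ 4 + w ^ 2) : 16 * N ≤ s ^ 4 ∧ e ^ 2 ≤ s ^ 2 := by
  have he4 : 16 ≤ e ^ 4 := by simpa using pow_le_pow_left₀ zero_le_two (Int.le_of_dvd he he2) 4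
  have hNe : e ^ 4 ≤ N * e ^ 4 := le_mul_of_one_le_left (by positivity) hN
  refine ⟨by nlinarith [sq_nonneg w], ?_⟩
  exact le_of_pow_le_pow_left₀ two_ne_zero (sq_nonneg _) (by nlinarith [sq_nonneg w])

end PowFourRelation

lemma Rat.exists_intCast_eq_of_sq_eq_intCast {t : ℚ} {m : ℤ} (h : t ^ 2 = m) :
    ∃ w : ℤ, (w : ℚ) = t :=
  IsIntegrallyClosed.exists_algebraMap_eq_of_isIntegral_pow two_pos (h ▸ isIntegral_algebraMap)

lemma exists_pow_four_eq_of_sq_eq {N : ℤ} {q y : ℚ} (hq : q ≠ 0)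
    (hy : y ^ 2 = (q ^ 2) ^ 3 - N * q ^ 2) :
    ∃ w : ℤ, q.num ^ 4 = N * q.den ^ 4 + w ^ 2 ∧ y = q.num * w / q.den ^ 3 := by
  have hnum : (q.num : ℚ) ≠ 0 := Int.cast_ne_zero.mpr (Rat.num_ne_zero.mpr hq)
  have hden : (q.den : ℚ) ≠ 0 := Nat.cast_ne_zero.mpr q.den_nz
  have ht : (y * q.den ^ 3 / q.num) ^ 2 = ((q.num ^ 4 - N * q.den ^ 4 : ℤ) : ℚ) := by
    have hq2 : q ^ 2 = q.num ^ 2 / q.den ^ 2 := by rw [← div_pow, Rat.num_div_den]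
    rw [div_pow, mul_pow, hy, hq2]
    push_cast
    field_simp
  obtain ⟨w, hw⟩ := Rat.exists_intCast_eq_of_sq_eq_intCast ht
  refine ⟨w, ?_, ?_⟩
  · have : ((w ^ 2 : ℤ) : ℚ) = ((q.num ^ 4 - N * q.den ^ 4 : ℤ) : ℚ) := by
      rw [Int.cast_pow, hw, ht]
    have := Int.cast_injective this
    linarith
  · rw [hw]
    field_simp

lemma naiveHeight_eq_log_num {x : ℚ} (h : (x.den : ℤ) ≤ x.num) :
    naiveHeight x = Real.log x.num := by
  have h0 : (0 : ℤ) ≤ x.num := (Int.natCast_nonneg _).trans h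
  rw [naiveHeight, abs_of_nonneg (by exact_mod_cast h0), max_eq_left (by exact_mod_cast h)]

lemma log_abs_num_le_naiveHeight (x : ℚ) : Real.log |(x.num : ℝ)| ≤ naiveHeight x := by
  rcases eq_or_ne x.num 0 with h | h
  · rw [h, Int.cast_zero, abs_zero, Real.log_zero]
    exact Real.log_nonneg (le_max_of_le_right (by exact_mod_cast x.pos))
  · exact Real.log_le_log (by positivity) (le_max_left _ _)

lemma Rat.num_div_sq_eq_of_isCoprime {a b : ℤ} (hb : b ≠ 0) (h : IsCoprime a b) :
    (((a : ℚ) / b) ^ 2).num = a ^ 2 := by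
  rw [div_pow]
  exact_mod_cast Rat.num_div_eq_of_coprime (by positivity) (Int.isCoprime_iff_nat_coprime.mp h.pow)

theorem naiveHeight_bounds_of_isSquare {N : ℕ} (hN : Squarefree N) (hN4 : N % 4 = 2) {x y : ℚ}
    (hx : IsSquare x) (hy : y ^ 2 = x ^ 3 - N * x) (hy0 : y ≠ 0) :
    Real.log (16 * N) ≤ 2 * naiveHeight x ∧
      4 * naiveHeight x ≤ naiveHeight (((x ^ 2 + N) / (2 * y)) ^ 2) := by
  obtain ⟨q, rfl⟩ := hx
  rw [← sq] at hy ⊢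
  have hN0 : 0 < N := by omega
  have hq : q ≠ 0 := by
    rintro rfl
    exact hy0 (pow_eq_zero_iff two_ne_zero |>.mp (by simpa using hy))
  obtain ⟨w, hrel, hyw⟩ := exists_pow_four_eq_of_sq_eq (N := N) hq (by exact_mod_cast hy)
  have hw0 : w ≠ 0 := by
    rintro rfl
    exact hy0 (by simpa using hyw)
  have he2 : (2 : ℤ) ∣ q.den := two_dvd_of_pow_four_eq (by omega) hrel
  obtain ⟨h16, hden⟩ := pow_four_lower_bounds (by exact_mod_cast hN0) (by positivity) he2 hrel
  have hx_height (k : ℕ) : k * naiveHeight (q ^ 2) = Real.log (((q.num : ℝ) ^ 2) ^ k) := by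
    rw [naiveHeight_eq_log_num (by rwa [Rat.num_pow, Rat.den_pow, Nat.cast_pow]), Real.log_pow,
      Rat.num_pow, Int.cast_pow]
  have hz_num : ((((q ^ 2) ^ 2 + N) / (2 * y)) ^ 2).num = (q.num ^ 4 + N * q.den ^ 4) ^ 2 := by
    have hz : ((q ^ 2) ^ 2 + N) / (2 * y) =
        ((q.num ^ 4 + N * q.den ^ 4 : ℤ) : ℚ) / ((2 * q.num * w * q.den : ℤ) : ℚ) := by
      have hq2 : q ^ 2 = q.num ^ 2 / q.den ^ 2 := by rw [← div_pow, Rat.num_div_den]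
      have hden0 : (q.den : ℚ) ≠ 0 := Nat.cast_ne_zero.mpr q.den_nz
      rw [hyw, hq2]
      push_cast
      field_simp
    rw [hz, Rat.num_div_sq_eq_of_isCoprime (by simp [hq, hw0, q.den_nz])
      (isCoprime_pow_four_add_mul (Int.squarefree_natCast.mpr hN) q.isCoprime_num_den he2 hrel)]
  have hs0 : (q.num : ℝ) ≠ 0 := Int.cast_ne_zero.mpr (Rat.num_ne_zero.mpr hq)
  constructor
  · calc Real.log (16 * N) ≤ Real.log (((q.num : ℝ) ^ 2) ^ 2) :=
          Real.log_le_log (by positivity) (by rw [← pow_mul]; exact_mod_cast h16)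
      _ = 2 * naiveHeight (q ^ 2) := by exact_mod_cast (hx_height 2).symm
  · calc 4 * naiveHeight (q ^ 2) = Real.log (((q.num : ℝ) ^ 2) ^ 4) := by
          exact_mod_cast hx_height 4
      _ ≤ Real.log |((((q ^ 2) ^ 2 + N) / (2 * y)) ^ 2).num| := by
          refine Real.log_le_log (by positivity) ?_
          rw [hz_num, Int.cast_pow, abs_pow, ← pow_mul, pow_mul _ 4 2]
          gcongr
          rw [abs_of_nonneg (by positivity)]
          exact_mod_cast le_add_of_nonneg_right (by positivity)
      _ ≤ _ := log_abs_num_le_naiveHeight _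

lemma le_of_tendsto_div_pow {u : ℕ → ℝ} {c L : ℝ} (hc : 0 < c) (hu : ∀ n, c * u n ≤ u (n + 1))
    (hlim : Tendsto (fun n => u n / c ^ n) atTop (𝓝 L)) : u 0 ≤ L := by
  have hmono : Monotone fun n => u n / c ^ n := monotone_nat_of_le_succ fun n => by
    rw [pow_succ', ← div_div, div_le_div_iff_of_pos_right (by positivity), le_div_iff₀ hc,
      mul_comm]
    exact hu n
  simpa using hmono.ge_of_tendsto hlim 0

theorem Ecurve.naiveHeight_xCoord_bounds {N : ℕ} (hN : Squarefree N) (hN4 : N % 4 = 2)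
    {Q : (Ecurve (-N)).Point} (hQ : 4 • Q ≠ 0) :
    Real.log (16 * N) ≤ 2 * naiveHeight (xCoord (2 • Q)) ∧
      4 * naiveHeight (xCoord (2 • Q)) ≤ naiveHeight (xCoord (4 • Q)) := by
  have h4 : 4 • Q = 2 • Q + 2 • Q := by rw [← add_nsmul]
  obtain ⟨x, y, h, hQ2, hy⟩ := exists_eq_some_of_add_self_ne_zero (h4 ▸ hQ)
  obtain ⟨x₀, y₀, h₀, rfl, hy₀⟩ := exists_eq_some_of_add_self_ne_zero (A := -N) (Q := Q) <| by
    rw [← two_nsmul]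
    rintro h2
    exact hQ (by rw [h4, h2, add_zero])
  have hx : IsSquare x := by
    have := congrArg xCoord hQ2
    rw [two_nsmul, xCoord_add_self h₀ hy₀, xCoord_some] at this
    exact this ▸ IsSquare.sq _
  rw [h4, hQ2, xCoord_add_self h hy, xCoord_some, sub_neg_eq_add]
  exact naiveHeight_bounds_of_isSquare hN hN4 hx (by rw [equation h]; ring) hy

theorem Ecurve.log_le_of_tendsto_naiveHeight {N : ℕ} (hN : Squarefree N) (hN4 : N % 4 = 2)
    {P : (Ecurve (-N)).Point} (hP : ¬ IsOfFinAddOrder P) {L : ℝ}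
    (hlim : Tendsto (fun n : ℕ => naiveHeight (xCoord (2 ^ n • P)) / 2 / 4 ^ n) atTop (𝓝 L)) :
    Real.log (16 * N) / 16 ≤ L := by
  set f : ℕ → ℝ := fun n => naiveHeight (xCoord (2 ^ n • P))
  have hbounds (n : ℕ) : Real.log (16 * N) ≤ 2 * f (n + 1) ∧ 4 * f (n + 1) ≤ f (n + 2) := by
    have h2 : 2 • 2 ^ n • P = 2 ^ (n + 1) • P := by rw [smul_smul, pow_succ']
    have h4 : 4 • 2 ^ n • P = 2 ^ (n + 2) • P := by rw [smul_smul]; ring_nf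
    have hne : 4 • 2 ^ n • P ≠ 0 := by
      rw [h4]
      exact fun h => hP (isOfFinAddOrder_iff_nsmul_eq_zero.mpr ⟨_, by positivity, h⟩)
    simpa only [f, h2, h4] using naiveHeight_xCoord_bounds hN hN4 hne
  have hf1 : f 1 / 8 ≤ L :=
    le_of_tendsto_div_pow (u := fun n => f (n + 1) / 8) four_pos
      (fun n => by linarith [(hbounds n).2])
      ((hlim.comp (tendsto_add_atTop_nat 1)).congr fun n => by simp [f, pow_succ]; ring)
  linarith [(hbounds 0).1]

lemma Nat.two_mul_mod_four_of_squarefree {m : ℕ} (h : Squarefree (2 * m)) : 2 * m % 4 = 2 := by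
  have : ¬ 2 ∣ m := fun hm => by simpa using h 2 (Nat.mul_dvd_mul_left 2 hm)
  omega

/-- On `E : y² = x³ - 2rDx` with `2rD` square-free, the Néron–Tate canonical height
(normalized so that `ĥ(P) = lim (1/2)·h(x([2ⁿ]P))/4ⁿ`) of any point `P ∈ E(ℚ)` of
infinite order satisfies `ĥ(P) ≥ (1/16)·log(4rD)`. -/
theorem stmt_14 (r D : ℕ) (hr : 0 < r) (hD : 0 < D) (hsf : Squarefree (2 * r * D))
    (P : (Ecurve (-(2 * r * D : ℚ))).Point) (hP : ¬ IsOfFinAddOrder P)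
    (hhat : ℝ)
    (hlim : Filter.Tendsto
      (fun n : ℕ => naiveHeight (xCoord ((2 ^ n : ℤ) • P)) / 2 / 4 ^ n)
      Filter.atTop (nhds hhat)) :
    (1 / 16 : ℝ) * Real.log (4 * r * D) ≤ hhat := by
  have hN4 : 2 * r * D % 4 = 2 :=
    mul_assoc 2 r D ▸ Nat.two_mul_mod_four_of_squarefree (mul_assoc 2 r D ▸ hsf)
  have hA : (-(2 * r * D : ℚ)) = -((2 * r * D : ℕ) : ℚ) := by push_cast; ring
  revert P
  rw [hA]
  intro P hP hlim
  have hsmul (n : ℕ) : (2 ^ n : ℤ) • P = 2 ^ n • P := by exact_mod_cast natCast_zsmul P (2 ^ n)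
  simp only [hsmul] at hlim
  have hrD : (0 : ℝ) < r * D := by positivity
  calc (1 / 16 : ℝ) * Real.log (4 * r * D) ≤ Real.log (16 * (2 * r * D : ℕ)) / 16 := by
        rw [one_div_mul_eq_div]
        exact div_le_div_of_nonneg_right
          (Real.log_le_log (by positivity) (by push_cast; linarith)) (by norm_num)
    _ ≤ hhat := Ecurve.log_le_of_tendsto_naiveHeight hsf hN4 hP hlim
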